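/- arXiv:0803.3293 — 5 statements merged into one kernel-verified Lean document; each statement's English description precedes it below -/
import Mathlib

section
/- If T and T' are rank-homogeneous subtrees of ω^{<ω} such that for every level n the sets of ordinal tree ranks realized by elements of T_n and T'_n coincide, and T_n contains an element of rank ∞ iff T'_n does, then T ≅ T'. -/
/-- A tree is a set of finite sequences of naturals closed under initial
segments. -/
def IsTree (T : Set (List ℕ)) : Prop :=
  ∀ s ∈ T, ∀ t : List ℕ, t <+: s → t ∈ T

/-- `ρ` is the tree-rank function of `T`, where `ρ a = some α` means
`rk(a) = α` and `ρ a = none` means `rk(a) = ∞`:  a node has rank `∞` iff some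
successor does, and a ranked node has rank the least ordinal strictly above
the ranks of all its successors (so terminal nodes have rank `0`). -/
def IsTreeRank (T : Set (List ℕ)) (ρ : List ℕ → Option Ordinal) : Prop :=
  ∀ a ∈ T,
    (ρ a = none ↔ ∃ n : ℕ, a ++ [n] ∈ T ∧ ρ (a ++ [n]) = none) ∧
    ∀ α : Ordinal, ρ a = some α →
      (∀ n : ℕ, a ++ [n] ∈ T → ∃ β < α, ρ (a ++ [n]) = some β) ∧
      ∀ γ : Ordinal, (∀ n : ℕ, a ++ [n] ∈ T → ∃ β < γ, ρ (a ++ [n]) = some β) →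
        α ≤ γ

/-- `α < rk a`, where `rk a = ∞` counts as above every ordinal. -/
def RankGT (ρ : List ℕ → Option Ordinal) (a : List ℕ) (α : Ordinal) : Prop :=
  ρ a = none ∨ ∃ γ : Ordinal, ρ a = some γ ∧ α < γ

/-- `T` is rank-homogeneous: (1) if `a ∈ T_n`, `b ∈ T_{n+1}` with
`rk(b) = α < rk(a)`, then `a` has infinitely many successors of rank `α`;
(2) every node of rank `∞` has infinitely many successors of rank `∞`. -/
def RankHomogeneous (T : Set (List ℕ)) (ρ : List ℕ → Option Ordinal) : Prop :=
  (∀ a ∈ T, ∀ α : Ordinal,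
    (∃ b ∈ T, b.length = a.length + 1 ∧ ρ b = some α) →
    RankGT ρ a α →
    {k : ℕ | a ++ [k] ∈ T ∧ ρ (a ++ [k]) = some α}.Infinite) ∧
  (∀ a ∈ T, ρ a = none →
    {k : ℕ | a ++ [k] ∈ T ∧ ρ (a ++ [k]) = none}.Infinite)

/-!
Back and forth along the levels. Call `a ∈ T` and `a' ∈ T'` matched when they lie on the same
level and have the same rank. For matched nodes and any value `v` of the rank, the children of
rank `v` form an infinite set on both sides or an empty set on both sides: rank-homogeneity makes
every nonempty such set infinite, and the equality of the ranks realized on the next level lets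
a child of rank `v` on one side be reflected on the other. Hence the children of matched nodes
can be paired off by a rank-preserving bijection, and composing these bijections from the root
down gives the isomorphism, whose inverse is assembled the same way.
-/

open Cardinal Set

universe u

/-- Rebuilds a sequence letter by letter, each new letter depending on the prefix read so far and
on its image. -/
def inducedMap {α β : Type*} (Φ : List α → List β → α → β) (a : List α) : List β :=
  a.reverseRecOn [] fun a x b => b ++ [Φ a b x]

section InducedMap

variable {α β : Type*} (Φ : List α → List β → α → β)

@[simp]
lemma inducedMap_nil : inducedMap Φ [] = [] := by
  simp [inducedMap]

lemma inducedMap_append_singleton (a : List α) (x : α) :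
    inducedMap Φ (a ++ [x]) = inducedMap Φ a ++ [Φ a (inducedMap Φ a) x] := by
  simp [inducedMap]

@[simp]
lemma length_inducedMap (a : List α) : (inducedMap Φ a).length = a.length := by
  induction a using List.reverseRecOn with
  | nil => simp
  | append_singleton a x ih => simp [inducedMap_append_singleton, ih]

end InducedMap

lemma exists_bijOn_of_equiv {α β : Type*} [Nonempty β] {s : Set α} {t : Set β} (e : s ≃ t) :
    ∃ φ : α → β, BijOn φ s t ∧ ∀ x : s, φ x = e x := by
  classical
  let φ : α → β := fun x => if hx : x ∈ s then e ⟨x, hx⟩ else Classical.arbitrary β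
  have hφ : ∀ x : s, φ x = e x := fun x => dif_pos x.2
  refine ⟨φ, ⟨fun x hx => ?_, fun x hx y hy hxy => ?_, fun y hy => ?_⟩, hφ⟩
  · simpa only [hφ ⟨x, hx⟩] using (e ⟨x, hx⟩).2
  · rw [hφ ⟨x, hx⟩, hφ ⟨y, hy⟩, Subtype.val_inj, e.apply_eq_iff_eq] at hxy
    exact congrArg Subtype.val hxy
  · exact ⟨e.symm ⟨y, hy⟩, (e.symm ⟨y, hy⟩).2, by rw [hφ, e.apply_symm_apply]⟩

lemma exists_bijOn_of_mk_fiber_eq {α β : Type u} {γ : Type*} [Nonempty β] {s : Set α}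
    {t : Set β} {f : α → γ} {g : β → γ}
    (h : ∀ c, #{x | x ∈ s ∧ f x = c} = #{y | y ∈ t ∧ g y = c}) :
    ∃ φ : α → β, BijOn φ s t ∧ ∀ x ∈ s, g (φ x) = f x := by
  have hfib (c : γ) : Nonempty ({x : s // f x = c} ≃ {y : t // g y = c}) :=
    Cardinal.eq.1 <| (mk_congr (Equiv.subtypeSubtypeEquivSubtypeInter _ _)).trans <|
      (h c).trans (mk_congr (Equiv.subtypeSubtypeEquivSubtypeInter _ _)).symm
  let e : s ≃ t := Equiv.ofFiberEquiv fun c => (hfib c).some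
  obtain ⟨φ, hbij, hφ⟩ := exists_bijOn_of_equiv e
  refine ⟨φ, hbij, fun x hx => ?_⟩
  rw [hφ ⟨x, hx⟩]
  exact Equiv.ofFiberEquiv_map (fun c => (hfib c).some) ⟨x, hx⟩

def children (T : Set (List ℕ)) (a : List ℕ) : Set ℕ :=
  {k | a ++ [k] ∈ T}

def childrenOfRank (T : Set (List ℕ)) (ρ : List ℕ → Option Ordinal) (a : List ℕ)
    (v : Option Ordinal) : Set ℕ :=
  {k | a ++ [k] ∈ T ∧ ρ (a ++ [k]) = v}

def levelRanks (T : Set (List ℕ)) (ρ : List ℕ → Option Ordinal) (n : ℕ) :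
    Set (Option Ordinal) :=
  ρ '' {a | a ∈ T ∧ a.length = n}

lemma IsTree.rel_inducedMap_and_leftInverse {T : Set (List ℕ)} (hT : IsTree T)
    (R : List ℕ → List ℕ → Prop) (Φ Ψ : List ℕ → List ℕ → ℕ → ℕ)
    (hroot : [] ∈ T → R [] [])
    (hrel : ∀ a a', R a a' → ∀ k ∈ children T a, R (a ++ [k]) (a' ++ [Φ a a' k]))
    (hinv : ∀ a a', R a a' → ∀ k ∈ children T a, Ψ a' a (Φ a a' k) = k) :
    ∀ a ∈ T, R a (inducedMap Φ a) ∧ inducedMap Ψ (inducedMap Φ a) = a := by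
  intro a
  induction a using List.reverseRecOn with
  | nil => simpa using hroot
  | append_singleton a k ih =>
    intro hak
    obtain ⟨hRa, hΨa⟩ := ih (hT _ hak a (List.prefix_append a [k]))
    rw [inducedMap_append_singleton, inducedMap_append_singleton, hΨa, hinv _ _ hRa k hak]
    exact ⟨hrel _ _ hRa k hak, rfl⟩

theorem exists_iso_of_backAndForth {T T' : Set (List ℕ)} (hT : IsTree T) (hT' : IsTree T')
    (R : List ℕ → List ℕ → Prop) (hR : ∀ a a', R a a' → a ∈ T ∧ a' ∈ T')
    (hroot : [] ∈ T → R [] []) (hroot' : [] ∈ T' → R [] [])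
    (hstep : ∀ a a', R a a' → ∃ φ : ℕ → ℕ, BijOn φ (children T a) (children T' a') ∧
      ∀ k ∈ children T a, R (a ++ [k]) (a' ++ [φ k])) :
    ∃ F : List ℕ → List ℕ,
      BijOn F T T' ∧
      (∀ a ∈ T, (F a).length = a.length) ∧
      (∀ a ∈ T, ∀ k : ℕ, a ++ [k] ∈ T → ∃ m : ℕ, F (a ++ [k]) = F a ++ [m]) := by
  choose! Φ hΦ using hstep
  let Ψ b b' := Function.invFunOn (Φ b' b) (children T b')
  have hforth := hT.rel_inducedMap_and_leftInverse R Φ Ψ hroot (fun a a' h => (hΦ a a' h).2)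
    fun a a' h k hk => (hΦ a a' h).1.injOn.leftInvOn_invFunOn hk
  have hback := hT'.rel_inducedMap_and_leftInverse (fun b b' => R b' b) Ψ Φ hroot'
    (fun b b' h m hm => by
      simpa only [(hΦ b' b h).1.surjOn.rightInvOn_invFunOn hm] using
        (hΦ b' b h).2 _ ((hΦ b' b h).1.surjOn.mapsTo_invFunOn hm))
    fun b b' h m hm => (hΦ b' b h).1.surjOn.rightInvOn_invFunOn hm
  refine ⟨inducedMap Φ, InvOn.bijOn (f' := inducedMap Ψ)
      ⟨fun a ha => (hforth a ha).2, fun b hb => (hback b hb).2⟩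
      (fun a ha => (hR _ _ (hforth a ha).1).2) (fun b hb => (hR _ _ (hback b hb).1).1),
    fun a _ => length_inducedMap Φ a, fun a _ k _ => ⟨_, inducedMap_append_singleton Φ a k⟩⟩

section RankHomogeneous

variable {T T' : Set (List ℕ)} {ρ ρ' : List ℕ → Option Ordinal} {a a' : List ℕ}

lemma levelRanks_eq {n : ℕ}
    (hranks : {α : Ordinal | ∃ a ∈ T, a.length = n ∧ ρ a = some α} =
      {α : Ordinal | ∃ a ∈ T', a.length = n ∧ ρ' a = some α})
    (hinf : (∃ a ∈ T, a.length = n ∧ ρ a = none) ↔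
      (∃ a ∈ T', a.length = n ∧ ρ' a = none)) :
    levelRanks T ρ n = levelRanks T' ρ' n := by
  ext (_ | α)
  · simpa [levelRanks, and_assoc] using hinf
  · simpa [levelRanks, and_assoc] using Set.ext_iff.1 hranks α

lemma nil_mem_of_levelRanks_subset (hlev : levelRanks T ρ 0 ⊆ levelRanks T' ρ' 0)
    (h : [] ∈ T) : [] ∈ T' ∧ ρ' [] = ρ [] := by
  obtain ⟨b, ⟨hb, hlen⟩, hrk⟩ := hlev ⟨[], ⟨h, rfl⟩, rfl⟩
  obtain rfl := List.length_eq_zero_iff.1 hlen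
  exact ⟨hb, hrk⟩

lemma IsTreeRank.rankGT_of_child (hρ : IsTreeRank T ρ) (ha : a ∈ T) {k : ℕ} {α : Ordinal}
    (hk : a ++ [k] ∈ T) (hkα : ρ (a ++ [k]) = some α) : RankGT ρ a α := by
  cases h : ρ a with
  | none => exact Or.inl h
  | some γ =>
    obtain ⟨β, hβγ, hβ⟩ := ((hρ a ha).2 γ h).1 k hk
    exact Or.inr ⟨γ, h, Option.some_injective _ (hkα.symm.trans hβ) ▸ hβγ⟩

lemma RankHomogeneous.childrenOfRank_infinite (hhom : RankHomogeneous T ρ)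
    (hρ : IsTreeRank T ρ) (ha : a ∈ T) {v : Option Ordinal}
    (h : (childrenOfRank T ρ a v).Nonempty) : (childrenOfRank T ρ a v).Infinite := by
  obtain ⟨k, hk, hkv⟩ := h
  cases v with
  | none => exact hhom.2 a ha ((hρ a ha).1.2 ⟨k, hk, hkv⟩)
  | some α =>
    exact hhom.1 a ha α ⟨_, hk, by simp, hkv⟩ (hρ.rankGT_of_child ha hk hkv)

lemma RankHomogeneous.childrenOfRank_nonempty (hhom' : RankHomogeneous T' ρ')
    (hρ : IsTreeRank T ρ)
    (hlev : levelRanks T ρ (a.length + 1) ⊆ levelRanks T' ρ' (a.length + 1))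
    (ha : a ∈ T) (ha' : a' ∈ T') (hlen : a.length = a'.length) (hrk : ρ a = ρ' a')
    {v : Option Ordinal} (h : (childrenOfRank T ρ a v).Nonempty) :
    (childrenOfRank T' ρ' a' v).Nonempty := by
  obtain ⟨k, hk, hkv⟩ := h
  cases v with
  | none => exact (hhom'.2 a' ha' (hrk ▸ (hρ a ha).1.2 ⟨k, hk, hkv⟩)).nonempty
  | some α =>
    obtain ⟨b, ⟨hb, hblen⟩, hbα⟩ := hlev ⟨a ++ [k], ⟨hk, by simp⟩, hkv⟩
    have hgt : RankGT ρ' a' α := by rw [RankGT, ← hrk]; exact hρ.rankGT_of_child ha hk hkv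
    exact (hhom'.1 a' ha' α ⟨b, hb, hlen ▸ hblen, hbα⟩ hgt).nonempty

lemma mk_childrenOfRank_eq (hρ : IsTreeRank T ρ) (hρ' : IsTreeRank T' ρ')
    (hhom : RankHomogeneous T ρ) (hhom' : RankHomogeneous T' ρ')
    (hlev : levelRanks T ρ (a.length + 1) = levelRanks T' ρ' (a.length + 1))
    (ha : a ∈ T) (ha' : a' ∈ T') (hlen : a.length = a'.length) (hrk : ρ a = ρ' a')
    (v : Option Ordinal) : #(childrenOfRank T ρ a v) = #(childrenOfRank T' ρ' a' v) := by
  by_cases h : (childrenOfRank T ρ a v).Nonempty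
  · have h' := hhom'.childrenOfRank_nonempty hρ hlev.subset ha ha' hlen hrk h
    have := (hhom.childrenOfRank_infinite hρ ha h).to_subtype
    have := (hhom'.childrenOfRank_infinite hρ' ha' h').to_subtype
    rw [mk_eq_aleph0, mk_eq_aleph0]
  · have h' : ¬(childrenOfRank T' ρ' a' v).Nonempty := fun h' =>
      h (hhom.childrenOfRank_nonempty hρ' (hlen ▸ hlev.symm.subset) ha' ha hlen.symm hrk.symm h')
    rw [not_nonempty_iff_eq_empty] at h h'
    rw [h, h']

lemma exists_rank_preserving_bijOn_children (hρ : IsTreeRank T ρ) (hρ' : IsTreeRank T' ρ')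
    (hhom : RankHomogeneous T ρ) (hhom' : RankHomogeneous T' ρ')
    (hlev : levelRanks T ρ (a.length + 1) = levelRanks T' ρ' (a.length + 1))
    (ha : a ∈ T) (ha' : a' ∈ T') (hlen : a.length = a'.length) (hrk : ρ a = ρ' a') :
    ∃ φ : ℕ → ℕ, BijOn φ (children T a) (children T' a') ∧
      ∀ k ∈ children T a, ρ' (a' ++ [φ k]) = ρ (a ++ [k]) :=
  exists_bijOn_of_mk_fiber_eq (mk_childrenOfRank_eq hρ hρ' hhom hhom' hlev ha ha' hlen hrk)

end RankHomogeneous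

/-- If `T` and `T'` are rank-homogeneous trees such that for every level `n`
the sets of ordinal ranks realized in `T_n` and `T'_n` coincide, and `T_n`
has a node of rank `∞` iff `T'_n` does, then `T ≅ T'` (by a level-preserving
bijection preserving the successor relation). -/
theorem rankHomogeneous_iso (T T' : Set (List ℕ)) (hT : IsTree T)
    (hT' : IsTree T') (ρ ρ' : List ℕ → Option Ordinal)
    (hρ : IsTreeRank T ρ) (hρ' : IsTreeRank T' ρ')
    (hhom : RankHomogeneous T ρ) (hhom' : RankHomogeneous T' ρ')
    (hranks : ∀ n : ℕ,
      {α : Ordinal | ∃ a ∈ T, a.length = n ∧ ρ a = some α} =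
        {α : Ordinal | ∃ a ∈ T', a.length = n ∧ ρ' a = some α})
    (hinf : ∀ n : ℕ,
      (∃ a ∈ T, a.length = n ∧ ρ a = none) ↔
        (∃ a ∈ T', a.length = n ∧ ρ' a = none)) :
    ∃ F : List ℕ → List ℕ,
      Set.BijOn F T T' ∧
      (∀ a ∈ T, (F a).length = a.length) ∧
      (∀ a ∈ T, ∀ k : ℕ, a ++ [k] ∈ T → ∃ m : ℕ, F (a ++ [k]) = F a ++ [m]) := by
  have hlev (n : ℕ) : levelRanks T ρ n = levelRanks T' ρ' n := levelRanks_eq (hranks n) (hinf n)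
  refine exists_iso_of_backAndForth hT hT'
    (fun a a' => a ∈ T ∧ a' ∈ T' ∧ a.length = a'.length ∧ ρ a = ρ' a')
    (fun _ _ h => ⟨h.1, h.2.1⟩) (fun h => ?_) (fun h' => ?_) ?_
  · obtain ⟨h', hrk⟩ := nil_mem_of_levelRanks_subset (hlev 0).subset h
    exact ⟨h, h', rfl, hrk.symm⟩
  · obtain ⟨h, hrk⟩ := nil_mem_of_levelRanks_subset (hlev 0).symm.subset h'
    exact ⟨h, h', rfl, hrk⟩
  · rintro a a' ⟨ha, ha', hlen, hrk⟩
    obtain ⟨φ, hbij, hφ⟩ :=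
      exists_rank_preserving_bijOn_children hρ hρ' hhom hhom' (hlev _) ha ha' hlen hrk
    exact ⟨φ, hbij, fun k hk => ⟨hk, hbij.mapsTo hk, by simp [hlen], (hφ k hk).symm⟩⟩
end

section
/- There exists a family of 2^{ℵ₀} pairwise bi-immune subsets of ω, where sets A and B are bi-immune if for every partial computable function f: if the range of f restricted to A is infinite then it is not contained in B, and if the range of f restricted to B is infinite then it is not contained in A. -/
/-!
Meeting countably many dense sets, build one generic labelling `G` of the nodes of the binary
tree, and let each branch `x ∈ 2^ω` give the set `A_x` of heights `n` with `G (x ↾ n)` true.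
Different branches read disjoint parts of `G` above their splitting node, so one condition
handles all pairs of branches through two nodes `σ ≠ τ` of equal length at once: for a partial
function `f`, either some extension labels the cone above `σ` true at a height `a` and the cone
above `τ` false at a height `z ∈ f a`, which puts `z` into `ran(f↾A_x) \ A_y`; or no extension
can, and then `f` maps all large arguments to small values, so `ran(f↾A_x)` is finite.
-/

/-- The range of a partial function `f` restricted to `A`. -/
def ranRestrict (f : ℕ →. ℕ) (A : Set ℕ) : Set ℕ :=
  {y : ℕ | ∃ a ∈ A, y ∈ f a}

/-- `A` and `B` are bi-immune: for every partial computable `f`, if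
`ran(f↾A)` is infinite then it is not contained in `B`, and if `ran(f↾B)` is
infinite then it is not contained in `A`. -/
def BiImmune (A B : Set ℕ) : Prop :=
  ∀ f : ℕ →. ℕ, Nat.Partrec f →
    ((ranRestrict f A).Infinite → ¬ ranRestrict f A ⊆ B) ∧
    ((ranRestrict f B).Infinite → ¬ ranRestrict f B ⊆ A)

open Set
open Nat.Partrec (Code)

def branchPrefix (x : ℕ → Bool) (n : ℕ) : List Bool := (List.range n).map x

@[simp]
lemma length_branchPrefix (x : ℕ → Bool) (n : ℕ) : (branchPrefix x n).length = n := by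
  simp [branchPrefix]

lemma branchPrefix_isPrefix (x : ℕ → Bool) {m n : ℕ} (h : m ≤ n) :
    branchPrefix x m <+: branchPrefix x n := by
  have : (branchPrefix x n).take m = branchPrefix x m := by
    simp [branchPrefix, ← List.map_take, Nat.min_eq_left h]
  exact this ▸ List.take_prefix m _

lemma exists_branchPrefix_ne {x y : ℕ → Bool} (h : x ≠ y) :
    ∃ s, branchPrefix x s ≠ branchPrefix y s := by
  obtain ⟨k, hk⟩ := Function.ne_iff.mp h
  refine ⟨k + 1, fun hxy => hk ?_⟩
  simpa [branchPrefix] using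
    List.getElem_of_eq hxy (by simp : k < (branchPrefix x (k + 1)).length)

/-- A forcing condition: a labelling of the nodes of the binary tree, of which only the nodes
below `height` are committed. -/
structure TreeCondition where
  height : ℕ
  label : List Bool → Bool

namespace TreeCondition

instance : Preorder TreeCondition where
  le p q := p.height ≤ q.height ∧
    ∀ ρ : List Bool, ρ.length < p.height → p.label ρ = q.label ρ
  le_refl _ := ⟨le_rfl, fun _ _ => rfl⟩
  le_trans _ _ _ hpq hqr :=
    ⟨hpq.1.trans hqr.1, fun ρ hρ => (hpq.2 ρ hρ).trans (hqr.2 ρ (hρ.trans_le hpq.1))⟩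

lemma label_eq_of_monotone {c : ℕ → TreeCondition} (hc : Monotone c) {k l : ℕ}
    {ρ : List Bool} (hk : ρ.length < (c k).height) (hl : ρ.length < (c l).height) :
    (c k).label ρ = (c l).label ρ := by
  rcases le_total k l with h | h
  · exact (hc h).2 ρ hk
  · exact ((hc h).2 ρ hl).symm

def Forces (q : TreeCondition) (f : ℕ →. ℕ) (σ τ : List Bool) : Prop :=
  ∃ a z, z ∈ f a ∧ a < q.height ∧ z < q.height ∧
    (∀ x, branchPrefix x σ.length = σ → q.label (branchPrefix x a) = true) ∧
    (∀ y, branchPrefix y τ.length = τ → q.label (branchPrefix y z) = false)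

def decisive (f : ℕ →. ℕ) (σ τ : List Bool) : Order.Cofinal TreeCondition where
  carrier := {q | q.Forces f σ τ ∨ ∀ r, q ≤ r → ¬ r.Forces f σ τ}
  isCofinal q := by
    by_cases h : ∃ r, q ≤ r ∧ r.Forces f σ τ
    · obtain ⟨r, hqr, hr⟩ := h
      exact ⟨r, Or.inl hr, hqr⟩
    · push Not at h
      exact ⟨q, Or.inr h, le_rfl⟩

/-- Above height `N = max q.height |σ|` we may label the cone over `σ` true and everything
else false; this forces `(f, σ, τ)` as soon as `f` sends some `a ≥ N` to some `z ≥ N`. -/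
lemma ranRestrict_Ici_subset_Iio_of_not_forces {q : TreeCondition} {f : ℕ →. ℕ}
    {σ τ : List Bool} (hστ : σ ≠ τ) (hlen : σ.length = τ.length)
    (hq : ∀ r, q ≤ r → ¬ r.Forces f σ τ) :
    ranRestrict f (Ici (max q.height σ.length)) ⊆ Iio (max q.height σ.length) := by
  rintro z ⟨a, ha, hz⟩
  by_contra hzN
  simp only [mem_Ici, max_le_iff, mem_Iio, not_lt] at ha hzN
  classical
  let r : TreeCondition :=
    ⟨max a z + 1, fun ρ => if ρ.length < q.height then q.label ρ else decide (σ <+: ρ)⟩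
  have hqr : q ≤ r := ⟨show q.height ≤ max a z + 1 by omega, fun ρ hρ => by simp [r, hρ]⟩
  refine hq r hqr ⟨a, z, hz, by simp only [r]; omega, by simp only [r]; omega,
    fun x hx => ?_, fun y hy => ?_⟩
  · have : σ <+: branchPrefix x a := hx ▸ branchPrefix_isPrefix x ha.2
    simp [r, ha.1.not_gt, this]
  · have hτ : τ <+: branchPrefix y z := hy ▸ branchPrefix_isPrefix y (hlen ▸ hzN.2)
    have hσ : ¬ σ <+: branchPrefix y z := fun hσ =>
      hστ ((List.prefix_of_prefix_length_le hσ hτ hlen.le).eq_of_length hlen)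
    simp [r, hzN.1.not_gt, hσ]

end TreeCondition

lemma ranRestrict_finite_of_Ici_subset_Iio {f : ℕ →. ℕ} {N : ℕ}
    (hf : ranRestrict f (Ici N) ⊆ Iio N) (A : Set ℕ) : (ranRestrict f A).Finite := by
  have hlow : (ranRestrict f (Iio N)).Finite := by
    have : ranRestrict f (Iio N) = ⋃ a ∈ Iio N, {z | z ∈ f a} := by
      ext z; simp [ranRestrict]
    rw [this]
    exact (finite_Iio N).biUnion fun a _ =>
      Set.Subsingleton.finite fun _ h _ h' => Part.mem_unique h h'
  refine (hlow.union (finite_Iio N)).subset ?_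
  rintro z ⟨a, -, hz⟩
  rcases lt_or_ge a N with ha | ha
  · exact Or.inl ⟨a, ha, hz⟩
  · exact Or.inr (hf ⟨a, ha, hz⟩)

section Generic

open TreeCondition

variable {ι : Type*} [Encodable ι] (g : ι → ℕ →. ℕ)

noncomputable def genericChain : ℕ → TreeCondition :=
  Order.sequenceOfCofinals ⟨0, fun _ => false⟩ fun t : ι × List Bool × List Bool =>
    decisive (g t.1) t.2.1 t.2.2

def genericSet (x : ℕ → Bool) : Set ℕ :=
  {n | ∃ k, n < (genericChain g k).height ∧ (genericChain g k).label (branchPrefix x n) = true}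

lemma genericChain_monotone : Monotone (genericChain g) :=
  Order.sequenceOfCofinals.monotone _ _

lemma genericChain_mem_decisive (i : ι) (σ τ : List Bool) :
    genericChain g (Encodable.encode (i, σ, τ) + 1) ∈ decisive (g i) σ τ :=
  Order.sequenceOfCofinals.encode_mem (⟨0, fun _ => false⟩ : TreeCondition)
    (fun t : ι × List Bool × List Bool => decisive (g t.1) t.2.1 t.2.2) (i, σ, τ)

variable {g}

lemma notMem_genericSet {y : ℕ → Bool} {n k : ℕ} (hn : n < (genericChain g k).height)
    (hlabel : (genericChain g k).label (branchPrefix y n) = false) : n ∉ genericSet g y := by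
  rintro ⟨l, hl, hlabel'⟩
  have := label_eq_of_monotone (genericChain_monotone g) (k := k) (l := l)
    (ρ := branchPrefix y n) (by rwa [length_branchPrefix]) (by rwa [length_branchPrefix])
  exact Bool.false_ne_true (hlabel.symm.trans (this.trans hlabel'))

lemma exists_mem_ranRestrict_notMem_of_forces {k : ℕ} {f : ℕ →. ℕ} {σ τ : List Bool}
    (hforces : (genericChain g k).Forces f σ τ) {x y : ℕ → Bool}
    (hx : branchPrefix x σ.length = σ) (hy : branchPrefix y τ.length = τ) :
    ∃ z ∈ ranRestrict f (genericSet g x), z ∉ genericSet g y := by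
  obtain ⟨a, z, hz, ha, hzk, hσ, hτ⟩ := hforces
  exact ⟨z, ⟨a, ⟨k, ha, hσ x hx⟩, hz⟩, notMem_genericSet hzk (hτ y hy)⟩

lemma genericSet_dichotomy {x y : ℕ → Bool} (hxy : x ≠ y) (i : ι) :
    (∃ N, ranRestrict (g i) (Ici N) ⊆ Iio N) ∨
      ∃ z ∈ ranRestrict (g i) (genericSet g x), z ∉ genericSet g y := by
  obtain ⟨s, hs⟩ := exists_branchPrefix_ne hxy
  rcases genericChain_mem_decisive g i (branchPrefix x s) (branchPrefix y s) with
    hforces | hstuck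
  · exact Or.inr (exists_mem_ranRestrict_notMem_of_forces hforces (by simp) (by simp))
  · exact Or.inl ⟨_, ranRestrict_Ici_subset_Iio_of_not_forces hs (by simp) hstuck⟩

lemma not_ranRestrict_genericSet_subset {x y : ℕ → Bool} (hxy : x ≠ y) (i : ι)
    (hinf : (ranRestrict (g i) (genericSet g x)).Infinite) :
    ¬ ranRestrict (g i) (genericSet g x) ⊆ genericSet g y := by
  intro hsub
  rcases genericSet_dichotomy hxy i with ⟨N, hN⟩ | ⟨z, hz, hzy⟩
  · exact hinf (ranRestrict_finite_of_Ici_subset_Iio hN _)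
  · exact hzy (hsub hz)

lemma biImmune_genericSet (hg : ∀ f, Nat.Partrec f → ∃ i, g i = f) {x y : ℕ → Bool}
    (hxy : x ≠ y) : BiImmune (genericSet g x) (genericSet g y) := by
  intro f hf
  obtain ⟨i, rfl⟩ := hg f hf
  exact ⟨not_ranRestrict_genericSet_subset hxy i, not_ranRestrict_genericSet_subset hxy.symm i⟩

lemma genericSet_injective {i : ι} (hi : ∀ n, g i n = Part.some n) :
    Function.Injective (genericSet g) := by
  intro x y hxy
  by_contra hne
  rcases genericSet_dichotomy (g := g) hne i with ⟨N, hN⟩ | ⟨z, ⟨a, ha, hz⟩, hzy⟩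
  · exact lt_irrefl N (hN ⟨N, le_refl N, hi N ▸ Part.mem_some N⟩)
  · rw [hi, Part.mem_some_iff] at hz
    exact hzy (hz ▸ hxy ▸ ha)

end Generic

/-- There is a family of `2^{ℵ₀}` pairwise bi-immune subsets of `ω`. -/
theorem exists_continuum_pairwise_biImmune :
    ∃ 𝒜 : Set (Set ℕ), Cardinal.mk 𝒜 = Cardinal.continuum ∧
      ∀ A ∈ 𝒜, ∀ B ∈ 𝒜, A ≠ B → BiImmune A B := by
  have hinj := genericSet_injective (g := Code.eval) (i := Code.id) Code.eval_id
  refine ⟨range (genericSet Code.eval), ?_, ?_⟩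
  · rw [Cardinal.mk_range_eq _ hinj, Cardinal.mk_arrow]
    simp [Cardinal.two_power_aleph0]
  · rintro _ ⟨x, rfl⟩ _ ⟨y, rfl⟩ hAB
    exact biImmune_genericSet (fun f hf => Code.exists_code.mp hf) fun h => hAB (congrArg _ h)
end

section
/- There is a computable linear ordering that is not a well-ordering but has no hyperarithmetical infinite descending sequence; namely, the Kleene–Brouwer ordering of a computable tree T ⊆ ω^{<ω} that has a path but no hyperarithmetical path. -/
/-- The Kleene–Brouwer ordering on finite sequences: `σ < τ` iff `σ` properly
extends `τ`, or at the first place where they differ, `σ` has the smaller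
value. -/
def KB (σ τ : List ℕ) : Prop :=
  (τ <+: σ ∧ σ ≠ τ) ∨
    ∃ n : ℕ, σ.take n = τ.take n ∧
      ∃ hs : n < σ.length, ∃ ht : n < τ.length, σ.get ⟨n, hs⟩ < τ.get ⟨n, ht⟩

/-- `f` is a path through the tree `T`. -/
def IsPath (T : Set (List ℕ)) (f : ℕ → ℕ) : Prop :=
  ∀ n : ℕ, List.ofFn (fun i : Fin n => f i) ∈ T

/-! A finite sequence `σ` is compared through its key `σ 0, …, σ (|σ| - 1), ⊤, ⊤, …`: `KB` is
the lexicographic order of keys, hence a linear order. Along a `KB`-descending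
sequence the keys decrease lexicographically; restricted to the first `k` places they live in
the well-ordered `Lex (Fin k → WithTop ℕ)`, so every coordinate is eventually constant. No limit
coordinate is `⊤`, since otherwise the sequence itself would be eventually constant, so the
limit is a path through the tree, and it is a pointwise limit of the sequence. -/

open Filter

def kbKey (σ : List ℕ) : ℕ → WithTop ℕ := fun n => σ[n]?.elim ⊤ (↑)

section kbKey

variable {σ τ : List ℕ} {n k : ℕ}

lemma kbKey_eq_kbKey_iff : kbKey σ n = kbKey τ n ↔ σ[n]? = τ[n]? := by
  unfold kbKey
  cases σ[n]? <;> cases τ[n]? <;> simp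

lemma kbKey_of_lt (h : n < σ.length) : kbKey σ n = σ[n] := by
  simp [kbKey, h]

lemma kbKey_eq_top_iff : kbKey σ n = ⊤ ↔ σ.length ≤ n := by
  rw [← List.getElem?_eq_none_iff]
  unfold kbKey
  cases σ[n]? <;> simp

lemma kbKey_injective : Function.Injective kbKey := fun _ _ h =>
  List.ext_getElem? fun n => kbKey_eq_kbKey_iff.1 (congrFun h n)

lemma take_eq_take_iff_kbKey : σ.take k = τ.take k ↔ ∀ i < k, kbKey σ i = kbKey τ i := by
  simp only [kbKey_eq_kbKey_iff, List.ext_getElem?_iff, List.getElem?_take]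
  refine ⟨fun h i hi => by simpa [hi] using h i, fun h i => ?_⟩
  split_ifs with hi
  exacts [h i hi, rfl]

end kbKey

lemma Pi.toLex_lt_toLex_iff_exists {ι β : Type*} [LT ι] [LT β] {x y : ι → β} :
    toLex x < toLex y ↔ ∃ i, (∀ j < i, x j = y j) ∧ x i < y i :=
  Iff.rfl

theorem KB_iff_toLex_kbKey_lt {σ τ : List ℕ} :
    KB σ τ ↔ toLex (kbKey σ) < toLex (kbKey τ) := by
  rw [Pi.toLex_lt_toLex_iff_exists]
  constructor
  · rintro (⟨hpre, hne⟩ | ⟨n, htake, hσ, hτ, hlt⟩)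
    · have hlen : τ.length < σ.length :=
        hpre.length_le.lt_of_ne fun h => hne (hpre.eq_of_length h).symm
      have htake : σ.take τ.length = τ.take τ.length := by
        rw [List.take_length, ← List.prefix_iff_eq_take.1 hpre]
      refine ⟨τ.length, take_eq_take_iff_kbKey.1 htake, ?_⟩
      rw [kbKey_of_lt hlen, kbKey_eq_top_iff.2 le_rfl]
      exact WithTop.coe_lt_top _
    · refine ⟨n, take_eq_take_iff_kbKey.1 htake, ?_⟩
      rw [kbKey_of_lt hσ, kbKey_of_lt hτ]
      exact_mod_cast hlt
  · rintro ⟨n, hagree, hlt⟩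
    have hσ : n < σ.length := not_le.1 fun h => not_top_lt (kbKey_eq_top_iff.2 h ▸ hlt)
    by_cases hτ : n < τ.length
    · rw [kbKey_of_lt hσ, kbKey_of_lt hτ] at hlt
      exact Or.inr ⟨n, take_eq_take_iff_kbKey.2 hagree, hσ, hτ, by exact_mod_cast hlt⟩
    · have htake : σ.take τ.length = τ :=
        (take_eq_take_iff_kbKey.2 fun i hi => hagree i (hi.trans_le (not_lt.1 hτ))).trans
          List.take_length
      exact Or.inl ⟨List.prefix_iff_eq_take.2 htake.symm, fun h => hlt.ne (h ▸ rfl)⟩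

lemma KB_irrefl (σ : List ℕ) : ¬ KB σ σ := by
  rw [KB_iff_toLex_kbKey_lt]
  exact lt_irrefl _

lemma KB_trans {σ τ υ : List ℕ} (h₁ : KB σ τ) (h₂ : KB τ υ) : KB σ υ := by
  rw [KB_iff_toLex_kbKey_lt] at *
  exact h₁.trans h₂

lemma KB_total {σ τ : List ℕ} (h : σ ≠ τ) : KB σ τ ∨ KB τ σ := by
  simp only [KB_iff_toLex_kbKey_lt]
  exact lt_or_gt_of_ne (toLex.injective.ne (kbKey_injective.ne h))

lemma KB_iff_exists_lt {σ τ : List ℕ} :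
    KB σ τ ↔ (σ.take τ.length = τ ∧ σ ≠ τ) ∨
      ∃ n < σ.length, n < τ.length ∧ σ.take n = τ.take n ∧ σ.getD n 0 < τ.getD n 0 := by
  simp only [KB, List.prefix_iff_eq_take, eq_comm (a := τ)]
  refine or_congr_right ⟨?_, ?_⟩
  · rintro ⟨n, htake, hσ, hτ, hlt⟩
    exact ⟨n, hσ, hτ, htake, by simpa [List.getD_eq_getElem, hσ, hτ] using hlt⟩
  · rintro ⟨n, hσ, hτ, htake, hlt⟩
    exact ⟨n, htake, hσ, hτ, by simpa [List.getD_eq_getElem, hσ, hτ] using hlt⟩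

open Primrec in
lemma primrecRel_KB : PrimrecRel KB := by
  have hprefix : PrimrecRel fun σ τ : List ℕ => σ.take τ.length = τ ∧ σ ≠ τ :=
    (Primrec.eq.comp (list_take.comp (list_length.comp snd) fst) snd).and
      (Primrec.eq.comp fst snd).not
  have hdiff : PrimrecRel fun (n : ℕ) (p : List ℕ × List ℕ) =>
      n < p.2.length ∧ p.1.take n = p.2.take n ∧ p.1.getD n 0 < p.2.getD n 0 :=
    (nat_lt.comp fst (list_length.comp (snd.comp snd))).and
      ((Primrec.eq.comp (list_take.comp fst (fst.comp snd))
          (list_take.comp fst (snd.comp snd))).and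
        (nat_lt.comp ((list_getD 0).comp (fst.comp snd) fst)
          ((list_getD 0).comp (snd.comp snd) fst)))
  refine PrimrecPred.of_eq (hprefix.or
    (hdiff.exists_mem_list.comp (list_range.comp (list_length.comp fst)) .id)) fun _ => ?_
  simp only [List.mem_range, KB_iff_exists_lt, id]

lemma KB_ofFn_succ (f : ℕ → ℕ) (n : ℕ) :
    KB (List.ofFn fun i : Fin (n + 1) => f i) (List.ofFn fun i : Fin n => f i) := by
  refine Or.inl ⟨⟨[f n], ?_⟩, fun h => by simpa using congrArg List.length h⟩
  rw [List.ofFn_succ_last]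
  simp

lemma toLex_restrict_le {β : Type*} [PartialOrder β] {a b : ℕ → β} (h : toLex a ≤ toLex b)
    (k : ℕ) : toLex (fun i : Fin k => a i) ≤ toLex (fun i : Fin k => b i) := by
  rcases h.eq_or_lt with h | h
  · rw [toLex.injective h]
  obtain ⟨i, hagree, hlt⟩ := Pi.toLex_lt_toLex_iff_exists.1 h
  by_cases hi : i < k
  · exact le_of_lt (Pi.toLex_lt_toLex_iff_exists.2 ⟨⟨i, hi⟩, fun j hj => hagree j hj, hlt⟩)
  · exact (congrArg toLex (funext fun j : Fin k => hagree j (j.2.trans_le (not_lt.1 hi)))).le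

lemma exists_eventually_eq_of_antitone_toLex {β : Type*} [PartialOrder β] [WellFoundedLT β]
    {y : ℕ → ℕ → β} (hy : Antitone fun n => toLex (y n)) :
    ∃ F : ℕ → β, ∀ i, ∀ᶠ n in atTop, y n i = F i := by
  have h : ∀ i, ∃ b, ∀ᶠ n in atTop, y n i = b := fun i => by
    obtain ⟨N, hN⟩ := WellFoundedLT.antitone_chain_condition
      (f := fun n => toLex fun j : Fin (i + 1) => y n j) fun _ _ hmn => toLex_restrict_le (hy hmn) _
    exact ⟨y N i, eventually_atTop.2 ⟨N, fun n hn =>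
      (congrFun (toLex.injective (hN n hn)) ⟨i, i.lt_succ_self⟩).symm⟩⟩
  choose F hF using h
  exact ⟨F, hF⟩

def IsPrefixLimit (x : ℕ → List ℕ) (f : ℕ → ℕ) : Prop :=
  ∀ k, ∀ᶠ n in atTop, (x n).take k = List.ofFn fun i : Fin k => f i

lemma IsPrefixLimit.isPath {T : Set (List ℕ)} {x : ℕ → List ℕ} {f : ℕ → ℕ}
    (hf : IsPrefixLimit x f) (hT : IsTree T) (hxT : ∀ n, x n ∈ T) : IsPath T f := fun k => by
  obtain ⟨n, hn⟩ := (hf k).exists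
  exact hn ▸ hT _ (hxT n) _ (List.take_prefix _ _)

theorem exists_isPrefixLimit_of_KB_descending {x : ℕ → List ℕ}
    (hx : ∀ n, KB (x (n + 1)) (x n)) : ∃ f, IsPrefixLimit x f := by
  obtain ⟨F, hF⟩ := exists_eventually_eq_of_antitone_toLex (y := fun n => kbKey (x n))
    (antitone_nat_of_succ_le fun n => (KB_iff_toLex_kbKey_lt.1 (hx n)).le)
  have hagree : ∀ k, ∀ᶠ n in atTop, ∀ i < k, kbKey (x n) i = F i := fun k =>
    (eventually_all_finite (Set.finite_Iio k)).2 fun i _ => hF i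
  have hfin : ∀ i, F i ≠ ⊤ := by
    intro i hi
    obtain ⟨N, hN⟩ := eventually_atTop.1 (hagree (i + 1))
    have hshort : ∀ n ≥ N, (x n).take (i + 1) = x n := fun n hn => List.take_of_length_le <|
      (kbKey_eq_top_iff.1 ((hN n hn i i.lt_succ_self).trans hi)).trans i.le_succ
    have hconst : x (N + 1) = x N := by
      rw [← hshort _ N.le_succ, ← hshort N le_rfl, take_eq_take_iff_kbKey]
      exact fun j hj => (hN _ N.le_succ j hj).trans (hN N le_rfl j hj).symm
    exact KB_irrefl _ (hconst ▸ hx N)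
  refine ⟨fun i => (F i).untop (hfin i), fun k => (hagree k).mono fun n hn => ?_⟩
  rw [← (List.ofFn _).take_of_length_le (List.length_ofFn).le, take_eq_take_iff_kbKey]
  intro i hi
  rw [hn i hi, kbKey_of_lt (by simpa using hi), List.getElem_ofFn]
  exact (WithTop.coe_untop _ _).symm

theorem kleeneBrouwer_no_hyp_descending_general
    (Hfun : Set (ℕ → ℕ)) (Hseq : Set (ℕ → List ℕ))
    (hlim : ∀ x ∈ Hseq, ∀ f : ℕ → ℕ,
      (∀ k : ℕ, ∃ N : ℕ, ∀ n : ℕ, N ≤ n →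
        (x n).take k = List.ofFn (fun i : Fin k => f i)) → f ∈ Hfun)
    (T : Set (List ℕ)) (hT : IsTree T)
    (hpath : ∃ f : ℕ → ℕ, IsPath T f)
    (hnohyp : ∀ f ∈ Hfun, ¬ IsPath T f) :
    -- the KB ordering is a linear ordering on `T`:
    (∀ σ ∈ T, ¬ KB σ σ) ∧
    (∀ σ ∈ T, ∀ τ ∈ T, ∀ υ ∈ T, KB σ τ → KB τ υ → KB σ υ) ∧
    (∀ σ ∈ T, ∀ τ ∈ T, σ ≠ τ → KB σ τ ∨ KB τ σ) ∧
    -- it is computable: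
    ComputablePred (fun p : List ℕ × List ℕ => KB p.1 p.2) ∧
    -- it is not a well-ordering:
    (∃ x : ℕ → List ℕ, (∀ n, x n ∈ T) ∧ ∀ n, KB (x (n + 1)) (x n)) ∧
    -- but it has no hyperarithmetical infinite descending sequence:
    ∀ x ∈ Hseq, ¬ ((∀ n, x n ∈ T) ∧ ∀ n, KB (x (n + 1)) (x n)) := by
  refine ⟨fun σ _ => KB_irrefl σ, fun _ _ _ _ _ _ => KB_trans, fun _ _ _ _ => KB_total,
    primrecRel_KB.computablePred, ?_, ?_⟩
  · obtain ⟨f, hf⟩ := hpath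
    exact ⟨_, hf, KB_ofFn_succ f⟩
  · rintro x hx ⟨hxT, hdesc⟩
    obtain ⟨f, hf⟩ := exists_isPrefixLimit_of_KB_descending hdesc
    exact hnohyp f (hlim x hx f fun k => eventually_atTop.1 (hf k)) (hf.isPath hT hxT)

/-- There is a computable linear ordering that is not a well-ordering but has
no hyperarithmetical infinite descending sequence; namely, the Kleene–Brouwer
ordering of a computable tree `T ⊆ ω^{<ω}` that has a path but no
hyperarithmetical path.  Here `Hfun` is the class of hyperarithmetical
functions `ω → ω` and `Hseq` the class of hyperarithmetical sequences of
nodes; the only property of "hyperarithmetical" that is used is that `Hfun`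
contains every pointwise limit of a sequence in `Hseq`. -/
theorem kleeneBrouwer_no_hyp_descending
    (Hfun : Set (ℕ → ℕ)) (Hseq : Set (ℕ → List ℕ))
    (hlim : ∀ x ∈ Hseq, ∀ f : ℕ → ℕ,
      (∀ k : ℕ, ∃ N : ℕ, ∀ n : ℕ, N ≤ n →
        (x n).take k = List.ofFn (fun i : Fin k => f i)) → f ∈ Hfun)
    (T : Set (List ℕ)) (hT : IsTree T)
    (hTcomp : ComputablePred (· ∈ T))
    (hpath : ∃ f : ℕ → ℕ, IsPath T f)
    (hnohyp : ∀ f ∈ Hfun, ¬ IsPath T f) :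
    -- the KB ordering is a linear ordering on `T`:
    (∀ σ ∈ T, ¬ KB σ σ) ∧
    (∀ σ ∈ T, ∀ τ ∈ T, ∀ υ ∈ T, KB σ τ → KB τ υ → KB σ υ) ∧
    (∀ σ ∈ T, ∀ τ ∈ T, σ ≠ τ → KB σ τ ∨ KB τ σ) ∧
    -- it is computable:
    ComputablePred (fun p : List ℕ × List ℕ => KB p.1 p.2) ∧
    -- it is not a well-ordering:
    (∃ x : ℕ → List ℕ, (∀ n, x n ∈ T) ∧ ∀ n, KB (x (n + 1)) (x n)) ∧
    -- but it has no hyperarithmetical infinite descending sequence: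
    ∀ x ∈ Hseq, ¬ ((∀ n, x n ∈ T) ∧ ∀ n, KB (x (n + 1)) (x n)) :=
  kleeneBrouwer_no_hyp_descending_general Hfun Hseq hlim T hT hpath hnohyp
end

section
/- For the class K of ℚ-vector spaces with computable presentations: two computable ℚ-vector spaces are isomorphic if and only if for every n, one has n linearly independent elements iff the other does. Consequently the isomorphism relation for computable ℚ-vector spaces is Π⁰₃ (given that the index set is Π⁰₂ and the dimension-comparison condition is Π⁰₃). -/
/-- `V` has `n` linearly independent elements. -/
def HasIndep (V : Type*) [AddCommGroup V] [Module ℚ V] (n : ℕ) : Prop :=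
  ∃ f : Fin n → V, LinearIndependent ℚ f

/-!
A countable `ℚ`-vector space has rank at most `ℵ₀`, and a cardinal `c ≤ ℵ₀` is determined by the
natural numbers `n ≤ c`. Since `n ≤ rank V` says exactly that `V` has `n` independent vectors,
two countable spaces are isomorphic iff they have independent families of the same finite sizes.

For the complexity bound, `(∃ s, A s) ↔ (∃ s, B s)` is equivalent to
`∀ s, ∃ t t', (A s → B t) ∧ (B s → A t')`, so the isomorphism relation even has a `∀∃` definition
with computable matrix; a dummy innermost `∀` gives the `∀∃∀` form.
-/

universe u

open Cardinal

theorem hasIndep_iff_natCast_le_rank (V : Type*) [AddCommGroup V] [Module ℚ V] (n : ℕ) :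
    HasIndep V n ↔ n ≤ Module.rank ℚ V :=
  Module.le_rank_iff.symm

theorem rank_le_aleph0_of_countable (R M : Type*) [Semiring R] [AddCommMonoid M] [Module R M]
    [Countable M] : Module.rank R M ≤ ℵ₀ :=
  (rank_le_card R M).trans mk_le_aleph0

theorem nonempty_linearEquiv_iff_forall_hasIndep_iff (V W : Type u) [AddCommGroup V] [Module ℚ V]
    [Countable V] [AddCommGroup W] [Module ℚ W] [Countable W] :
    Nonempty (V ≃ₗ[ℚ] W) ↔ ∀ n : ℕ, (HasIndep V n ↔ HasIndep W n) := by
  simp_rw [Module.nonempty_linearEquiv_iff_rank_eq, hasIndep_iff_natCast_le_rank,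
    ← toENat_eq_iff_of_le_aleph0 (rank_le_aleph0_of_countable ℚ V)
      (rank_le_aleph0_of_countable ℚ W), ← natCast_le_toENat]
  exact ⟨fun h n => h ▸ Iff.rfl, ENat.eq_of_forall_natCast_le_iff⟩

theorem exists_imp_of_imp_exists {α : Type*} [Nonempty α] {p : Prop} {q : α → Prop}
    (h : p → ∃ x, q x) : ∃ x, p → q x := by
  by_cases hp : p
  · obtain ⟨x, hx⟩ := h hp
    exact ⟨x, fun _ => hx⟩
  · exact ⟨Classical.arbitrary α, fun h => absurd h hp⟩

section ExistsIff

variable (R : ℕ × ℕ × ℕ → Bool)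

/-- `k` codes a pair `(n, s)` and `w` a pair `(s_b, s_a)` of witnesses for the implications
`R (a, n, s) → R (b, n, s_b)` and `R (b, n, s) → R (a, n, s_a)`. -/
def existsIffMatrix (a b k w : ℕ) : Bool :=
  (!R (a, k.unpair) || R (b, k.unpair.1, w.unpair.1)) &&
    (!R (b, k.unpair) || R (a, k.unpair.1, w.unpair.2))

theorem existsIffMatrix_eq_true {a b k w : ℕ} :
    existsIffMatrix R a b k w = true ↔
      (R (a, k.unpair) = true → R (b, k.unpair.1, w.unpair.1) = true) ∧
        (R (b, k.unpair) = true → R (a, k.unpair.1, w.unpair.2) = true) := by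
  simp only [existsIffMatrix, Bool.and_eq_true, Bool.or_eq_true, Bool.not_eq_true',
    imp_iff_not_or, Bool.not_eq_true]

theorem forall_exists_iff_iff_forall_exists_existsIffMatrix (a b : ℕ) :
    (∀ n, (∃ s, R (a, n, s) = true) ↔ ∃ s, R (b, n, s) = true) ↔
      ∀ k, ∃ w, existsIffMatrix R a b k w = true := by
  constructor
  · intro h k
    obtain ⟨sb, hsb⟩ := exists_imp_of_imp_exists fun hA : R (a, k.unpair) = true =>
      (h k.unpair.1).1 ⟨_, hA⟩
    obtain ⟨sa, hsa⟩ := exists_imp_of_imp_exists fun hB : R (b, k.unpair) = true =>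
      (h k.unpair.1).2 ⟨_, hB⟩
    refine ⟨Nat.pair sb sa, (existsIffMatrix_eq_true R).2 ?_⟩
    simpa only [Nat.unpair_pair] using ⟨hsb, hsa⟩
  · intro h n
    refine ⟨fun ⟨s, hs⟩ => ?_, fun ⟨s, hs⟩ => ?_⟩ <;>
      obtain ⟨w, hw⟩ := h (Nat.pair n s) <;>
      rw [existsIffMatrix_eq_true, Nat.unpair_pair] at hw
    exacts [⟨_, hw.1 hs⟩, ⟨_, hw.2 hs⟩]

theorem Computable.existsIffMatrix {α : Type*} [Primcodable α] {R : ℕ × ℕ × ℕ → Bool}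
    {a b k w : α → ℕ} (hR : Computable R) (ha : Computable a) (hb : Computable b)
    (hk : Computable k) (hw : Computable w) :
    Computable fun x => existsIffMatrix R (a x) (b x) (k x) (w x) := by
  have hku := Primrec.unpair.to_comp.comp hk
  have hwu := Primrec.unpair.to_comp.comp hw
  have hImp : ∀ {c d v : α → ℕ}, Computable c → Computable d → Computable v →
      Computable fun x => !R (c x, (k x).unpair) || R (d x, (k x).unpair.1, v x) :=
    fun hc hd hv => Primrec.or.to_comp.comp (Primrec.not.to_comp.comp (hR.comp (hc.pair hku)))
      (hR.comp (hd.pair ((Computable.fst.comp hku).pair hv)))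
  exact Primrec.and.to_comp.comp (hImp ha hb (Computable.fst.comp hwu))
    (hImp hb ha (Computable.snd.comp hwu))

end ExistsIff

/-- Two countable `ℚ`-vector spaces are isomorphic iff for every `n`, one has
`n` linearly independent elements iff the other does.  Consequently, for a
(uniformly presented) family of countable `ℚ`-vector spaces in which the
relation "`V_e` has `n` independent elements" is `Σ⁰₁` (witnessed by a
computable relation `R` with `HasIndep (V e) n ↔ ∃ s, R (e,n,s)`), the
isomorphism relation is `Π⁰₃`: it has a `∀∃∀` definition with computable
matrix. -/
theorem qVectorSpace_iso_iff_and_Pi03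
    (V : ℕ → Type) [∀ e, AddCommGroup (V e)] [∀ e, Module ℚ (V e)]
    [∀ e, Countable (V e)]
    (R : ℕ × ℕ × ℕ → Bool) (hR : Computable R)
    (hInd : ∀ e n : ℕ, HasIndep (V e) n ↔ ∃ s : ℕ, R (e, n, s) = true) :
    (∀ a b : ℕ,
      Nonempty (V a ≃ₗ[ℚ] V b) ↔ ∀ n : ℕ, (HasIndep (V a) n ↔ HasIndep (V b) n)) ∧
    (∃ S : ℕ × ℕ × ℕ × ℕ × ℕ → Bool, Computable S ∧
      ∀ a b : ℕ,
        Nonempty (V a ≃ₗ[ℚ] V b) ↔ ∀ n : ℕ, ∃ s : ℕ, ∀ t : ℕ,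
          S (a, b, n, s, t) = true) := by
  have hiso a b := nonempty_linearEquiv_iff_forall_hasIndep_iff (V a) (V b)
  refine ⟨hiso, fun x => existsIffMatrix R x.1 x.2.1 x.2.2.1 x.2.2.2.1, ?_, fun a b => ?_⟩
  · exact hR.existsIffMatrix Computable.fst (Computable.fst.comp Computable.snd)
      (Computable.fst.comp (Computable.snd.comp Computable.snd))
      (Computable.fst.comp (Computable.snd.comp (Computable.snd.comp Computable.snd)))
  · simp only [hiso, hInd, forall_exists_iff_iff_forall_exists_existsIffMatrix, forall_const]
end

section
/- Let A and B be mutually generic subsets of ω for the forcing with conditions pairs (p₁,p₂) of finite partial functions ω → 2 (finite binary strings). Then A and B are bi-immune: for every partial computable function f, if ran(f↾A) is infinite it is not contained in B, and symmetrically. -/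
/-- The binary string `p` is an initial-segment condition for the set `A`. -/
def AgreesWith (p : List Bool) (A : Set ℕ) : Prop :=
  ∀ i : ℕ, (h : i < p.length) → (p.get ⟨i, h⟩ = true ↔ i ∈ A)

/-- One pair of conditions extends another. -/
def CondExtends (q p : List Bool × List Bool) : Prop :=
  p.1 <+: q.1 ∧ p.2 <+: q.2

/-- `(A, B)` is mutually 1-generic for forcing with pairs of binary strings:
every dense `Σ⁰₁` (c.e.) set of conditions is met by a pair of initial
segments of (the characteristic functions of) `A` and `B`. -/
def MutuallyGeneric (A B : Set ℕ) : Prop :=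
  ∀ D : Set (List Bool × List Bool),
    REPred (fun p => p ∈ D) →
    (∀ p : List Bool × List Bool, ∃ q ∈ D, CondExtends q p) →
    ∃ q ∈ D, AgreesWith q.1 A ∧ AgreesWith q.2 B

/-!
If `ran(f↾A)` is infinite, then the c.e. set of conditions `(p₁, p₂)` with `p₁(a) = 1` and
`p₂(f a) = 0` for some `a` is dense: any condition is extended by picking a value `y = f a` that
is at least `|p₂|` and is not one of the finitely many values of `f` on `[0, |p₁|)`, and setting
`p₁(a) = 1`, `p₂(y) = 0`. A pair meeting it yields `a ∈ A` with `f a ∉ B`. Mutual genericity is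
symmetric in `A` and `B`, which gives the other half of bi-immunity.
-/

theorem ComputablePred.rePred_exists {α β : Type*} [Primcodable α] [Primcodable β]
    {P : α × β → Prop} (hP : ComputablePred P) : REPred fun a => ∃ b, P (a, b) := by
  obtain ⟨_, hP⟩ := hP
  let test : α → ℕ → Bool := fun a n =>
    Option.casesOn (Encodable.decode (α := β) n) false fun b => decide (P (a, b))
  have htest : Computable₂ test :=
    Computable.option_casesOn (Computable.decode.comp Computable.snd) (Computable.const false)
      (hP.comp ((Computable.fst.comp Computable.fst).pair Computable.snd)).to₂
  refine (Partrec.rfind htest.partrec₂).dom_re.of_eq fun a => Nat.rfind_dom.trans ?_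
  constructor
  · rintro ⟨n, hn, -⟩
    rcases hb : Encodable.decode (α := β) n with _ | b
    · simp [test, hb] at hn
    · exact ⟨b, by simpa [test, hb] using hn⟩
  · rintro ⟨b, hb⟩
    exact ⟨Encodable.encode b, by simpa [test] using hb, fun _ => trivial⟩

theorem List.getD_append_replicate_of_length_le {α : Type*} (l : List α) (b d : α) {i : ℕ}
    (h : l.length ≤ i) : (l ++ List.replicate (i + 1 - l.length) b).getD i d = b := by
  rw [List.getD_append_right _ _ _ _ h]
  exact List.getD_replicate b (by omega)

theorem AgreesWith.mem_of_getD_eq_true {p : List Bool} {A : Set ℕ} {i : ℕ}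
    (h : AgreesWith p A) (hi : p.getD i false = true) : i ∈ A := by
  by_cases hlt : i < p.length
  · rw [List.getD_eq_getElem _ _ hlt] at hi
    exact (h i hlt).1 hi
  · rw [List.getD_eq_default _ _ (not_lt.1 hlt)] at hi
    exact absurd hi (by decide)

theorem AgreesWith.notMem_of_getD_eq_false {p : List Bool} {A : Set ℕ} {i : ℕ}
    (h : AgreesWith p A) (hi : p.getD i true = false) : i ∉ A := by
  by_cases hlt : i < p.length
  · rw [List.getD_eq_getElem _ _ hlt] at hi
    exact fun hiA => Bool.false_ne_true (hi ▸ (h i hlt).2 hiA)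
  · rw [List.getD_eq_default _ _ (not_lt.1 hlt)] at hi
    exact absurd hi (by decide)

theorem ranRestrict_subset_ran (f : ℕ →. ℕ) (A : Set ℕ) : ranRestrict f A ⊆ f.ran :=
  fun _ ⟨a, _, hy⟩ => ⟨a, hy⟩

theorem Set.Finite.ranRestrict {A : Set ℕ} (hA : A.Finite) (f : ℕ →. ℕ) :
    (_root_.ranRestrict f A).Finite := by
  have : _root_.ranRestrict f A = ⋃ a ∈ A, {y | y ∈ f a} := by
    ext y
    simp [_root_.ranRestrict]
  rw [this]
  exact hA.biUnion fun a _ => Set.Subsingleton.finite fun _ hx _ hy => Part.mem_unique hx hy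

/-- The conditions forcing `a ∈ A` and `f a ∉ B` for some `a`. A string read past its end gives
the `getD` default, so each default is the opposite of the bit being forced. -/
def escapeConditions (f : ℕ →. ℕ) : Set (List Bool × List Bool) :=
  {p | ∃ a y, p.1.getD a false = true ∧ y ∈ f a ∧ p.2.getD y true = false}

open Nat.Partrec.Code in
theorem escapeConditions_re {f : ℕ →. ℕ} (hf : Nat.Partrec f) :
    REPred (· ∈ escapeConditions f) := by
  obtain ⟨c, rfl⟩ := exists_code.1 hf
  have hP : PrimrecPred fun x : (List Bool × List Bool) × ℕ × ℕ × ℕ =>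
      x.1.1.getD x.2.1 false = true ∧ evaln x.2.2.2 c x.2.1 = some x.2.2.1 ∧
        x.1.2.getD x.2.2.1 true = false := by
    open Primrec in
    have ha := fst.comp (snd (α := List Bool × List Bool) (β := ℕ × ℕ × ℕ))
    have hy := fst.comp (snd.comp (snd (α := List Bool × List Bool) (β := ℕ × ℕ × ℕ)))
    have hk := snd.comp (snd.comp (snd (α := List Bool × List Bool) (β := ℕ × ℕ × ℕ)))
    exact (Primrec.eq.comp ((list_getD false).comp (fst.comp fst) ha) (const true)).and
      ((Primrec.eq.comp (primrec_evaln.comp ((hk.pair (const c)).pair ha))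
        (option_some.comp hy)).and
        (Primrec.eq.comp ((list_getD true).comp (snd.comp fst) hy) (const false)))
  refine hP.computablePred.rePred_exists.of_eq fun p => ⟨?_, ?_⟩
  · rintro ⟨⟨a, y, k⟩, ha, hk, hy⟩
    exact ⟨a, y, ha, evaln_sound hk, hy⟩
  · rintro ⟨a, y, ha, hy, hyB⟩
    obtain ⟨k, hk⟩ := evaln_complete.1 hy
    exact ⟨⟨a, y, k⟩, ha, hk, hyB⟩

theorem escapeConditions_dense {f : ℕ →. ℕ} (hinf : f.ran.Infinite)
    (p : List Bool × List Bool) : ∃ q ∈ escapeConditions f, CondExtends q p := by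
  obtain ⟨y, ⟨a, hya⟩, hy⟩ := (hinf.sdiff
    (((Set.finite_Iio p.1.length).ranRestrict f).union (Set.finite_Iio p.2.length))).nonempty
  simp only [Set.mem_union, Set.mem_Iio, not_or, not_lt] at hy
  have ha : p.1.length ≤ a := not_lt.1 fun ha => hy.1 ⟨a, ha, hya⟩
  refine ⟨(p.1 ++ List.replicate (a + 1 - p.1.length) true,
    p.2 ++ List.replicate (y + 1 - p.2.length) false), ⟨a, y, ?_, hya, ?_⟩,
    List.prefix_append _ _, List.prefix_append _ _⟩
  · exact List.getD_append_replicate_of_length_le _ _ _ ha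
  · exact List.getD_append_replicate_of_length_le _ _ _ hy.2

theorem MutuallyGeneric.not_ranRestrict_subset {A B : Set ℕ} (hgen : MutuallyGeneric A B)
    {f : ℕ →. ℕ} (hf : Nat.Partrec f) (hinf : (ranRestrict f A).Infinite) :
    ¬ ranRestrict f A ⊆ B := by
  intro hsub
  obtain ⟨q, ⟨a, y, ha, hy, hyB⟩, hqA, hqB⟩ := hgen _ (escapeConditions_re hf)
    (escapeConditions_dense (hinf.mono (ranRestrict_subset_ran f A)))
  exact hqB.notMem_of_getD_eq_false hyB (hsub ⟨a, hqA.mem_of_getD_eq_true ha, hy⟩)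

theorem MutuallyGeneric.symm {A B : Set ℕ} (h : MutuallyGeneric A B) : MutuallyGeneric B A := by
  intro D hD hdense
  have hswap : Computable (Prod.swap : List Bool × List Bool → _) :=
    Computable.snd.pair Computable.fst
  obtain ⟨q, hq, hqB, hqA⟩ := h (Prod.swap ⁻¹' D) (hD.comp hswap) fun p => by
    obtain ⟨q, hq, h1, h2⟩ := hdense p.swap
    exact ⟨q.swap, by simpa using hq, h2, h1⟩
  exact ⟨q.swap, hq, hqA, hqB⟩

/-- Mutually generic sets are bi-immune. -/
theorem mutuallyGeneric_biImmune (A B : Set ℕ)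
    (hgen : MutuallyGeneric A B) : BiImmune A B := fun _ hf =>
  ⟨hgen.not_ranRestrict_subset hf, hgen.symm.not_ranRestrict_subset hf⟩
end
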